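/- Let I ⊆ ℝ be an open interval and let v : ℝ² × I → ℝ be smooth and positive with ∂v/∂t = v·Δv − ‖∇v‖² everywhere (∇, Δ Euclidean, in the x variable). Define Q := v·(∂³v/∂z³)·(∂³v/∂z̄³) = v·|∂³v/∂z³|² (a real, nonnegative function) and R := v⁻¹·(v·Δv − ‖∇v‖²). Then at every point of ℝ² × I, ∂Q/∂t ≤ v·ΔQ − 4·R·Q, where ΔQ is the Euclidean Laplacian of Q in the x variable. -/

import Mathlib

/- We identify `ℝ²` with `ℂ` via `(x₁,x₂) ↦ z = x₁ + i x₂`. -/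

/-- Partial derivative of a complex-valued function in the first Euclidean
coordinate. -/
noncomputable def pdx (f : ℂ → ℂ) (z : ℂ) : ℂ :=
  deriv (fun s : ℝ => f (z + (s : ℂ))) 0

/-- Partial derivative of a complex-valued function in the second Euclidean
coordinate. -/
noncomputable def pdy (f : ℂ → ℂ) (z : ℂ) : ℂ :=
  deriv (fun s : ℝ => f (z + (s : ℂ) * Complex.I)) 0

/-- The Wirtinger derivative `∂f/∂z = (1/2)(∂f/∂x₁ − i ∂f/∂x₂)`. -/
noncomputable def wz (f : ℂ → ℂ) : ℂ → ℂ :=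
  fun z => (pdx f z - Complex.I * pdy f z) / 2

/-- The Wirtinger derivative `∂f/∂z̄ = (1/2)(∂f/∂x₁ + i ∂f/∂x₂)`. -/
noncomputable def wzb (f : ℂ → ℂ) : ℂ → ℂ :=
  fun z => (pdx f z + Complex.I * pdy f z) / 2

/-- Partial derivative of a real-valued function in the first Euclidean
coordinate. -/
noncomputable def pdxR (f : ℂ → ℝ) (z : ℂ) : ℝ :=
  deriv (fun s : ℝ => f (z + (s : ℂ))) 0

/-- Partial derivative of a real-valued function in the second Euclidean
coordinate. -/
noncomputable def pdyR (f : ℂ → ℝ) (z : ℂ) : ℝ :=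
  deriv (fun s : ℝ => f (z + (s : ℂ) * Complex.I)) 0

/-- Euclidean Laplacian on `ℝ² ≅ ℂ`. -/
noncomputable def lapR (f : ℂ → ℝ) (z : ℂ) : ℝ :=
  pdxR (pdxR f) z + pdyR (pdyR f) z

/-- Squared Euclidean norm of the gradient on `ℝ² ≅ ℂ`. -/
noncomputable def gradSq (f : ℂ → ℝ) (z : ℂ) : ℝ :=
  (pdxR f z) ^ 2 + (pdyR f z) ^ 2

/-- The Daskalopoulos–Hamilton–Šešum quantity, in its manifestly real form
`Q = v · |∂³v/∂z³|²`, with Wirtinger derivatives taken in the `x` variable. -/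
noncomputable def QrDHS (v : ℂ × ℝ → ℝ) : ℂ × ℝ → ℝ :=
  fun p => v p * Complex.normSq (wz (wz (wz (fun w => (v (w, p.2) : ℂ)))) p.1)

/-- The scalar curvature `R = v⁻¹ (v·Δv − ‖∇v‖²)` of the evolving conformal
metric `v⁻¹ δᵢⱼ`. -/
noncomputable def scalarR (v : ℂ × ℝ → ℝ) : ℂ × ℝ → ℝ :=
  fun p => (v p)⁻¹ * (v p * lapR (fun z => v (z, p.2)) p.1
    - gradSq (fun z => v (z, p.2)) p.1)

/-! In the algebra of smooth complex functions on `ℝ² × I`, the operators `∂_z`, `∂_z̄` and `∂_t`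
are commuting derivations, and complex conjugation exchanges `∂_z` and `∂_z̄`. In these terms
the flow reads `v_t = 4 (v v_{z z̄} - v_z v_z̄)`; differentiating it three times in `z` gives the
evolution of `w = v_{zzz}`, and Leibniz' rule alone then yields
`v Q_t = v² ΔQ - 4 v R Q - 4 v (|v w_z + 2 v_z w|² + |v w_z̄ - v_z̄ w|²)` with `Δ = 4 ∂_z ∂_z̄`.
Dividing by `v > 0` and dropping the squares gives the inequality. -/

open Complex Set Filter Topology
open scoped ContDiff

section DerivationIdentities

variable {R A : Type*} [CommRing R] [CommRing A] [Algebra R A]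
  (D Db T : Derivation R A A)

@[simp]
theorem Derivation.map_ofNat (n : ℕ) [n.AtLeastTwo] : D (no_index (OfNat.ofNat n : A)) = 0 := by
  rw [← Nat.cast_ofNat]; exact D.map_natCast n

theorem Derivation.evolution_third_of_ricciFlow (hDDb : ∀ a, D (Db a) = Db (D a))
    (hTD : ∀ a, T (D a) = D (T a)) {v : A}
    (hflow : T v = 4 * (v * Db (D v) - D v * Db v)) :
    T (D (D (D v))) = 4 * (v * Db (D (D (D (D v)))) + 2 * D v * Db (D (D (D v)))
      - D (D (D (D v))) * Db v - 2 * D (D (D v)) * Db (D v)) := by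
  simp only [hTD, hflow, Derivation.leibniz, map_add, map_sub, map_zero, smul_eq_mul, hDDb,
    Derivation.map_ofNat]
  ring

theorem Derivation.evolution_dhsQuantity_of_ricciFlow (σ : A →+* A)
    (hDDb : ∀ a, D (Db a) = Db (D a)) (hσD : ∀ a, σ (D a) = Db (σ a))
    (hσDb : ∀ a, σ (Db a) = D (σ a)) (hσT : ∀ a, σ (T a) = T (σ a)) {v w : A} (hσv : σ v = v)
    (hflow : T v = 4 * (v * Db (D v) - D v * Db v))
    (hw : T w = 4 * (v * Db (D w) + 2 * D v * Db w - D w * Db v - 2 * w * Db (D v))) :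
    v * T (v * w * σ w) = 4 * v ^ 2 * D (Db (v * w * σ w))
      - 16 * (v * Db (D v) - D v * Db v) * (v * w * σ w)
      - 4 * v * ((v * D w + 2 * D v * w) * σ (v * D w + 2 * D v * w)
        + (v * Db w - Db v * w) * σ (v * Db w - Db v * w)) := by
  simp only [Derivation.leibniz, map_add, map_sub, map_mul, smul_eq_mul, hDDb, hσD, hσDb, ← hσT,
    hw, hflow, hσv, _root_.map_ofNat]
  ring

end DerivationIdentities

section SmoothAlgebra

variable {E : Type*} [NormedAddCommGroup E] [NormedSpace ℝ E]

def smoothAlgebra (U : TopologicalSpace.Opens E) : Subalgebra ℂ (E → ℂ) where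
  carrier := {F | ContDiffOn ℝ ∞ F U}
  mul_mem' hF hG := hF.mul hG
  add_mem' hF hG := hF.add hG
  algebraMap_mem' _ := contDiffOn_const

namespace smoothAlgebra

variable {U : TopologicalSpace.Opens E}

instance : CoeFun (smoothAlgebra U) fun _ => E → ℂ := ⟨Subtype.val⟩

@[simp]
theorem coe_ofNat (n : ℕ) [n.AtLeastTwo] :
    ((no_index (OfNat.ofNat n) : smoothAlgebra U) : E → ℂ) = OfNat.ofNat n :=
  map_ofNat (smoothAlgebra U).val n

theorem differentiableAt (F : smoothAlgebra U) {x : E} (hx : x ∈ U) : DifferentiableAt ℝ F x :=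
  (F.2.contDiffAt (U.isOpen.mem_nhds hx)).differentiableAt (by simp)

theorem contDiffOn_fderiv_apply (F : smoothAlgebra U) (e : E) :
    ContDiffOn ℝ ∞ (fun x => fderiv ℝ F x e) U :=
  (F.2.fderiv_of_isOpen U.isOpen le_rfl).clm_apply contDiffOn_const

/-- Extended by `0` off `U`, so that Leibniz' rule holds on all of `E`. -/
noncomputable def dirDeriv (U : TopologicalSpace.Opens E) (e : E) :
    Derivation ℂ (smoothAlgebra U) (smoothAlgebra U) :=
  Derivation.mk'
    { toFun F := ⟨(U : Set E).indicator fun x => fderiv ℝ F x e,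
        (contDiffOn_fderiv_apply F e).congr fun x hx => indicator_of_mem hx _⟩
      map_add' F G := by
        ext x
        by_cases hx : x ∈ U
        · simp [indicator_of_mem hx, fderiv_add (differentiableAt F hx) (differentiableAt G hx)]
        · simp [indicator_of_notMem hx]
      map_smul' c F := by
        ext x
        by_cases hx : x ∈ U
        · simp [indicator_of_mem hx, fderiv_const_smul (differentiableAt F hx)]
        · simp [indicator_of_notMem hx] }
    fun F G => by
      ext x
      by_cases hx : x ∈ U
      · simp [indicator_of_mem hx, fderiv_mul (differentiableAt F hx) (differentiableAt G hx)]
      · simp [indicator_of_notMem hx]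

theorem dirDeriv_apply_of_mem (e : E) (F : smoothAlgebra U) {x : E} (hx : x ∈ U) :
    dirDeriv U e F x = fderiv ℝ F x e := by
  simp [dirDeriv, hx]

theorem dirDeriv_apply_of_notMem (e : E) (F : smoothAlgebra U) {x : E} (hx : x ∉ U) :
    dirDeriv U e F x = 0 := by
  simp [dirDeriv, hx]

theorem dirDeriv_comm (e₁ e₂ : E) (F : smoothAlgebra U) :
    dirDeriv U e₁ (dirDeriv U e₂ F) = dirDeriv U e₂ (dirDeriv U e₁ F) := by
  ext x
  by_cases hx : x ∈ U
  swap
  · simp only [dirDeriv_apply_of_notMem _ _ hx]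
  have hF : ContDiffAt ℝ ∞ F x := F.2.contDiffAt (U.isOpen.mem_nhds hx)
  have hF' : DifferentiableAt ℝ (fderiv ℝ F) x :=
    (hF.fderiv_right (m := 1) (by norm_cast)).differentiableAt one_ne_zero
  have second (a b : E) : dirDeriv U a (dirDeriv U b F) x = fderiv ℝ (fderiv ℝ F) x a b := by
    have hloc : (dirDeriv U b F : E → ℂ) =ᶠ[𝓝 x] fun y => fderiv ℝ F y b :=
      eventually_of_mem (U.isOpen.mem_nhds hx) fun y hy => dirDeriv_apply_of_mem b F hy
    rw [dirDeriv_apply_of_mem a _ hx, hloc.fderiv_eq,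
      fderiv_clm_apply hF' (differentiableAt_const b)]
    simp
  rw [second, second,
    hF.isSymmSndFDerivAt (by rw [minSmoothness_of_isRCLikeNormedField]; norm_cast)]

noncomputable def conj (U : TopologicalSpace.Opens E) : smoothAlgebra U →+* smoothAlgebra U where
  toFun F := ⟨fun x => starRingEnd ℂ (F x), conjCLE.contDiff.comp_contDiffOn F.2⟩
  map_one' := by ext; simp
  map_mul' F G := by ext; simp
  map_zero' := by ext; simp
  map_add' F G := by ext; simp

@[simp]
theorem conj_apply (F : smoothAlgebra U) (x : E) : conj U F x = starRingEnd ℂ (F x) := rfl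

theorem conj_smul (c : ℂ) (F : smoothAlgebra U) :
    conj U (c • F) = starRingEnd ℂ c • conj U F := by
  ext; simp

theorem conj_dirDeriv (e : E) (F : smoothAlgebra U) :
    conj U (dirDeriv U e F) = dirDeriv U e (conj U F) := by
  ext x
  by_cases hx : x ∈ U
  · have hconj : ((conj U F : smoothAlgebra U) : E → ℂ) = conjCLE ∘ F := rfl
    simp only [conj_apply, dirDeriv_apply_of_mem e _ hx, hconj, conjCLE.comp_fderiv]
    rfl
  · simp [dirDeriv_apply_of_notMem e _ hx]

def ofReal (v : E → ℝ) (hv : ContDiffOn ℝ ∞ v U) : smoothAlgebra U :=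
  ⟨fun x => (v x : ℂ), ofRealCLM.contDiff.comp_contDiffOn hv⟩

@[simp]
theorem ofReal_apply (v : E → ℝ) (hv : ContDiffOn ℝ ∞ v U) (x : E) : ofReal v hv x = v x := rfl

theorem conj_ofReal (v : E → ℝ) (hv : ContDiffOn ℝ ∞ v U) : conj U (ofReal v hv) = ofReal v hv := by
  ext; simp

theorem hasDerivAt_comp_line (F : smoothAlgebra U) (x e : E) {s : ℝ} (hs : x + s • e ∈ U) :
    HasDerivAt (fun r : ℝ => F (x + r • e)) (dirDeriv U e F (x + s • e)) s := by
  have hline : HasDerivAt (fun r : ℝ => x + r • e) e s := by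
    simpa using ((hasDerivAt_id s).smul_const e).const_add x
  rw [dirDeriv_apply_of_mem e F hs]
  exact (differentiableAt F hs).hasFDerivAt.comp_hasDerivAt s hline

section Wirtinger

variable {U : TopologicalSpace.Opens (ℂ × ℝ)}

noncomputable def wirtinger (U : TopologicalSpace.Opens (ℂ × ℝ)) :
    Derivation ℂ (smoothAlgebra U) (smoothAlgebra U) :=
  (2⁻¹ : ℂ) • (dirDeriv U (1, 0) - I • dirDeriv U (I, 0))

noncomputable def wirtingerBar (U : TopologicalSpace.Opens (ℂ × ℝ)) :
    Derivation ℂ (smoothAlgebra U) (smoothAlgebra U) :=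
  (2⁻¹ : ℂ) • (dirDeriv U (1, 0) + I • dirDeriv U (I, 0))

theorem wirtinger_wirtingerBar_comm (F : smoothAlgebra U) :
    wirtinger U (wirtingerBar U F) = wirtingerBar U (wirtinger U F) := by
  simp only [wirtinger, wirtingerBar, Derivation.smul_apply, Derivation.add_apply,
    Derivation.sub_apply, Derivation.map_add, Derivation.map_sub, Derivation.map_smul,
    dirDeriv_comm (U := U) (1, 0) (I, 0)]
  module

theorem dirDeriv_wirtinger_comm (e : ℂ × ℝ) (F : smoothAlgebra U) :
    dirDeriv U e (wirtinger U F) = wirtinger U (dirDeriv U e F) := by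
  simp only [wirtinger, Derivation.smul_apply, Derivation.sub_apply, Derivation.map_sub,
    Derivation.map_smul, dirDeriv_comm e]

theorem conj_wirtinger (F : smoothAlgebra U) :
    conj U (wirtinger U F) = wirtingerBar U (conj U F) := by
  simp only [wirtinger, wirtingerBar, Derivation.smul_apply, Derivation.sub_apply,
    Derivation.add_apply, map_sub, conj_smul, conj_dirDeriv, conj_I, map_inv₀, map_ofNat]
  module

theorem conj_wirtingerBar (F : smoothAlgebra U) :
    conj U (wirtingerBar U F) = wirtinger U (conj U F) := by
  simp only [wirtinger, wirtingerBar, Derivation.smul_apply, Derivation.sub_apply,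
    Derivation.add_apply, map_add, conj_smul, conj_dirDeriv, conj_I, map_inv₀, map_ofNat]
  module

theorem laplacian_eq_four_mul_wirtinger_wirtingerBar (F : smoothAlgebra U) :
    dirDeriv U (1, 0) (dirDeriv U (1, 0) F) + dirDeriv U (I, 0) (dirDeriv U (I, 0) F)
      = 4 * wirtinger U (wirtingerBar U F) := by
  simp only [wirtinger, wirtingerBar, Derivation.smul_apply, Derivation.add_apply,
    Derivation.sub_apply, Derivation.map_add, Derivation.map_smul,
    dirDeriv_comm (U := U) (1, 0) (I, 0), smul_add, smul_sub, smul_smul]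
  ext x
  simp only [AddMemClass.coe_add, Pi.add_apply, MulMemClass.coe_mul, coe_ofNat,
    AddSubgroupClass.coe_sub, SetLike.val_smul, Pi.mul_apply, Pi.ofNat_apply, Pi.sub_apply,
    Pi.smul_apply, smul_eq_mul]
  linear_combination dirDeriv U (I, 0) (dirDeriv U (I, 0) F) x * I_sq

theorem sq_add_sq_eq_four_mul_wirtinger_mul_wirtingerBar (F : smoothAlgebra U) :
    dirDeriv U (1, 0) F ^ 2 + dirDeriv U (I, 0) F ^ 2
      = 4 * (wirtinger U F * wirtingerBar U F) := by
  simp only [wirtinger, wirtingerBar, Derivation.smul_apply, Derivation.add_apply,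
    Derivation.sub_apply]
  ext x
  simp only [AddMemClass.coe_add, SubmonoidClass.coe_pow, Pi.add_apply, Pi.pow_apply, smul_add,
    Algebra.smul_mul_assoc, Algebra.mul_smul_comm, SetLike.val_smul, MulMemClass.coe_mul, coe_ofNat,
    AddSubgroupClass.coe_sub, Pi.smul_apply, Pi.mul_apply, Pi.ofNat_apply, Pi.sub_apply,
    smul_eq_mul]
  linear_combination dirDeriv U (I, 0) F x ^ 2 * I_sq

end Wirtinger

end smoothAlgebra

end SmoothAlgebra

theorem deriv_ofReal_comp (f : ℝ → ℝ) (x : ℝ) : deriv (fun s => (f s : ℂ)) x = deriv f x := by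
  by_cases hf : DifferentiableAt ℝ f x
  · exact hf.hasDerivAt.ofReal_comp.deriv
  · have hf' : ¬ DifferentiableAt ℝ (fun s => (f s : ℂ)) x := fun h =>
      hf (by simpa [Function.comp_def] using reCLM.differentiableAt.comp x h)
    rw [deriv_zero_of_not_differentiableAt hf, deriv_zero_of_not_differentiableAt hf', ofReal_zero]

theorem pdx_ofReal (g : ℂ → ℝ) : pdx (fun z => (g z : ℂ)) = fun z => (pdxR g z : ℂ) :=
  funext fun _ => deriv_ofReal_comp _ 0

theorem pdy_ofReal (g : ℂ → ℝ) : pdy (fun z => (g z : ℂ)) = fun z => (pdyR g z : ℂ) :=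
  funext fun _ => deriv_ofReal_comp _ 0

theorem ofReal_lapR (g : ℂ → ℝ) (z : ℂ) :
    (lapR g z : ℂ) = pdx (pdx fun z => (g z : ℂ)) z + pdy (pdy fun z => (g z : ℂ)) z := by
  simp only [lapR, pdx_ofReal, pdy_ofReal, ofReal_add]

theorem ofReal_gradSq (g : ℂ → ℝ) (z : ℂ) :
    (gradSq g z : ℂ) = pdx (fun z => (g z : ℂ)) z ^ 2 + pdy (fun z => (g z : ℂ)) z ^ 2 := by
  simp only [gradSq, pdx_ofReal, pdy_ofReal, ofReal_add, ofReal_pow]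

section Slices

open smoothAlgebra

variable {U : TopologicalSpace.Opens (ℂ × ℝ)}

theorem pdx_slice (F : smoothAlgebra U) {t : ℝ} (hline : ∀ w, (w, t) ∈ U) :
    pdx (fun w => F (w, t)) = fun z => dirDeriv U (1, 0) F (z, t) := by
  funext z
  have := hasDerivAt_comp_line F (z, t) (1, 0) (s := 0) (by simpa using hline z)
  simp only [zero_smul, add_zero, Prod.smul_mk, Prod.mk_add_mk, smul_zero, real_smul,
    mul_one] at this
  exact this.deriv

theorem pdy_slice (F : smoothAlgebra U) {t : ℝ} (hline : ∀ w, (w, t) ∈ U) :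
    pdy (fun w => F (w, t)) = fun z => dirDeriv U (I, 0) F (z, t) := by
  funext z
  have := hasDerivAt_comp_line F (z, t) (I, 0) (s := 0) (by simpa using hline z)
  simp only [zero_smul, add_zero, Prod.smul_mk, Prod.mk_add_mk, smul_zero, real_smul] at this
  exact this.deriv

theorem wz_slice (F : smoothAlgebra U) {t : ℝ} (hline : ∀ w, (w, t) ∈ U) :
    wz (fun w => F (w, t)) = fun z => wirtinger U F (z, t) := by
  funext z
  simp [wz, wirtinger, pdx_slice F hline, pdy_slice F hline, div_eq_inv_mul]

theorem wzb_slice (F : smoothAlgebra U) {t : ℝ} (hline : ∀ w, (w, t) ∈ U) :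
    wzb (fun w => F (w, t)) = fun z => wirtingerBar U F (z, t) := by
  funext z
  simp [wzb, wirtingerBar, pdx_slice F hline, pdy_slice F hline, div_eq_inv_mul, mul_add]

theorem wz_wz_wz_slice (F : smoothAlgebra U) {t : ℝ} (hline : ∀ w, (w, t) ∈ U) :
    wz (wz (wz fun w => F (w, t))) = fun z => wirtinger U (wirtinger U (wirtinger U F)) (z, t) := by
  rw [wz_slice F hline, wz_slice _ hline, wz_slice _ hline]

theorem wzb_wzb_wzb_slice (F : smoothAlgebra U) {t : ℝ} (hline : ∀ w, (w, t) ∈ U) :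
    wzb (wzb (wzb fun w => F (w, t)))
      = fun z => wirtingerBar U (wirtingerBar U (wirtingerBar U F)) (z, t) := by
  rw [wzb_slice F hline, wzb_slice _ hline, wzb_slice _ hline]

variable {g : ℂ × ℝ → ℝ} {F : smoothAlgebra U}

theorem ofReal_lapR_slice (hgF : ∀ x ∈ U, (g x : ℂ) = F x) {t : ℝ} (hline : ∀ w, (w, t) ∈ U)
    (z : ℂ) :
    (lapR (fun w => g (w, t)) z : ℂ)
      = (4 * wirtinger U (wirtingerBar U F) : smoothAlgebra U) (z, t) := by
  have hslice : (fun w => (g (w, t) : ℂ)) = fun w => F (w, t) := funext fun w => hgF _ (hline w)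
  rw [ofReal_lapR, hslice, pdx_slice F hline, pdx_slice _ hline, pdy_slice F hline,
    pdy_slice _ hline, ← laplacian_eq_four_mul_wirtinger_wirtingerBar]
  rfl

theorem ofReal_gradSq_slice (hgF : ∀ x ∈ U, (g x : ℂ) = F x) {t : ℝ} (hline : ∀ w, (w, t) ∈ U)
    (z : ℂ) :
    (gradSq (fun w => g (w, t)) z : ℂ)
      = (4 * (wirtinger U F * wirtingerBar U F) : smoothAlgebra U) (z, t) := by
  have hslice : (fun w => (g (w, t) : ℂ)) = fun w => F (w, t) := funext fun w => hgF _ (hline w)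
  rw [ofReal_gradSq, hslice, pdx_slice F hline, pdy_slice F hline,
    ← sq_add_sq_eq_four_mul_wirtinger_mul_wirtingerBar]
  rfl

theorem ofReal_deriv_time_slice (hgF : ∀ x ∈ U, (g x : ℂ) = F x) {z : ℂ} {t : ℝ}
    (hx : (z, t) ∈ U) : ((deriv (fun s => g (z, s)) t : ℝ) : ℂ) = dirDeriv U (0, 1) F (z, t) := by
  have hderiv : HasDerivAt (fun s => F (z, s)) (dirDeriv U (0, 1) F (z, t)) t := by
    simpa using hasDerivAt_comp_line F (z, 0) (0, 1) (s := t) (by simpa using hx)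
  have hnear : ∀ᶠ s in 𝓝 t, (z, s) ∈ U :=
    (continuous_const.prodMk continuous_id).continuousAt.preimage_mem_nhds (U.isOpen.mem_nhds hx)
  rw [← deriv_ofReal_comp]
  exact (hderiv.congr_of_eventuallyEq (hnear.mono fun s hs => hgF _ hs)).deriv

end Slices

section RicciFlow

open smoothAlgebra

variable {I : Set ℝ} (hI : IsOpen I)

def slab : TopologicalSpace.Opens (ℂ × ℝ) := ⟨univ ×ˢ I, isOpen_univ.prod hI⟩

theorem slice_mem_slab {t : ℝ} (ht : t ∈ I) (w : ℂ) : (w, t) ∈ slab hI := ⟨trivial, ht⟩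

variable {hI} {v : ℂ × ℝ → ℝ}

theorem ofReal_QrDHS (hv : ContDiffOn ℝ ∞ v (slab hI)) {x : ℂ × ℝ} (hx : x ∈ slab hI) :
    (QrDHS v x : ℂ) = (ofReal v hv * wirtinger _ (wirtinger _ (wirtinger _ (ofReal v hv)))
      * conj _ (wirtinger _ (wirtinger _ (wirtinger _ (ofReal v hv))))
        : smoothAlgebra (slab hI)) x := by
  obtain ⟨z, t⟩ := x
  have h := wz_wz_wz_slice (ofReal v hv) (slice_mem_slab hI hx.2)
  simp only [smoothAlgebra.ofReal_apply] at h
  simp [QrDHS, h, mul_conj, mul_assoc]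

theorem ofReal_mul_wz_mul_wzb (hv : ContDiffOn ℝ ∞ v (slab hI)) {t : ℝ} (ht : t ∈ I) (z : ℂ) :
    (v (z, t) : ℂ) * wz (wz (wz fun w => (v (w, t) : ℂ))) z
      * wzb (wzb (wzb fun w => (v (w, t) : ℂ))) z = (QrDHS v (z, t) : ℂ) := by
  have hline := slice_mem_slab hI ht
  have hwz := wz_wz_wz_slice (ofReal v hv) hline
  have hwzb := wzb_wzb_wzb_slice (ofReal v hv) hline
  have hbar : conj _ (wirtinger _ (wirtinger _ (wirtinger _ (ofReal v hv))))
      = wirtingerBar _ (wirtingerBar _ (wirtingerBar _ (ofReal v hv))) := by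
    rw [conj_wirtinger, conj_wirtinger, conj_wirtinger, smoothAlgebra.conj_ofReal]
  simp only [smoothAlgebra.ofReal_apply] at hwz hwzb
  rw [hwz, hwzb, ofReal_QrDHS hv (hline z), hbar]
  rfl

theorem dirDeriv_time_ofReal_of_ricciFlow (hv : ContDiffOn ℝ ∞ v (slab hI))
    (hv_flow : ∀ p : ℂ × ℝ, p.2 ∈ I → deriv (fun s : ℝ => v (p.1, s)) p.2
      = v p * lapR (fun z => v (z, p.2)) p.1 - gradSq (fun z => v (z, p.2)) p.1) :
    dirDeriv (slab hI) (0, 1) (ofReal v hv)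
      = 4 * (ofReal v hv * wirtingerBar _ (wirtinger _ (ofReal v hv))
        - wirtinger _ (ofReal v hv) * wirtingerBar _ (ofReal v hv)) := by
  ext ⟨z, t⟩
  by_cases ht : t ∈ I
  · have hline := slice_mem_slab hI ht
    have hgF : ∀ x ∈ slab hI, (v x : ℂ) = ofReal v hv x := fun _ _ => rfl
    rw [← ofReal_deriv_time_slice hgF (hline z), hv_flow (z, t) ht]
    push_cast
    rw [ofReal_lapR_slice hgF hline, ofReal_gradSq_slice hgF hline, wirtinger_wirtingerBar_comm]
    simp only [MulMemClass.coe_mul, coe_ofNat, Pi.mul_apply, Pi.ofNat_apply, Pi.sub_apply,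
      smoothAlgebra.ofReal_apply]
    ring
  · have hx : (z, t) ∉ slab hI := fun h => ht h.2
    simp [wirtinger, wirtingerBar, dirDeriv_apply_of_notMem _ _ hx]

theorem mul_deriv_QrDHS_of_ricciFlow (hv : ContDiffOn ℝ ∞ v (slab hI))
    (hv_flow : ∀ p : ℂ × ℝ, p.2 ∈ I → deriv (fun s : ℝ => v (p.1, s)) p.2
      = v p * lapR (fun z => v (z, p.2)) p.1 - gradSq (fun z => v (z, p.2)) p.1)
    {t : ℝ} (ht : t ∈ I) (z : ℂ) :
    ∃ N ≥ 0, v (z, t) * deriv (fun s => QrDHS v (z, s)) t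
      = v (z, t) ^ 2 * lapR (fun w => QrDHS v (w, t)) z
        - 4 * (v (z, t) * lapR (fun w => v (w, t)) z - gradSq (fun w => v (w, t)) z)
          * QrDHS v (z, t) - 4 * v (z, t) * N := by
  have hline := slice_mem_slab hI ht
  have hflow := dirDeriv_time_ofReal_of_ricciFlow hv hv_flow
  have hid := Derivation.evolution_dhsQuantity_of_ricciFlow (wirtinger (slab hI))
    (wirtingerBar (slab hI)) (dirDeriv (slab hI) (0, 1)) (conj (slab hI))
    wirtinger_wirtingerBar_comm conj_wirtinger conj_wirtingerBar (conj_dirDeriv _)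
    (smoothAlgebra.conj_ofReal v hv) hflow
    (Derivation.evolution_third_of_ricciFlow _ _ _ wirtinger_wirtingerBar_comm
      (dirDeriv_wirtinger_comm _) hflow)
  set V := ofReal v hv
  set W := wirtinger _ (wirtinger _ (wirtinger _ V))
  have hQ : ∀ x ∈ slab hI, (QrDHS v x : ℂ) = (V * W * conj _ W) x := fun x hx => ofReal_QrDHS hv hx
  have hv' : ∀ x ∈ slab hI, (v x : ℂ) = V x := fun _ _ => rfl
  set X := V * wirtinger _ W + 2 * wirtinger _ V * W
  set Y := V * wirtingerBar _ W - wirtingerBar _ V * W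
  refine ⟨normSq (X (z, t)) + normSq (Y (z, t)), add_nonneg (normSq_nonneg _) (normSq_nonneg _),
    ofReal_injective ?_⟩
  rw [← wirtinger_wirtingerBar_comm] at hid
  have hpt := congrFun (congrArg Subtype.val hid) (z, t)
  push_cast
  rw [hv' _ (hline z)]
  clear_value V W X Y
  rw [ofReal_deriv_time_slice hQ (hline z), ofReal_lapR_slice hQ hline, ofReal_lapR_slice hv' hline,
    ofReal_gradSq_slice hv' hline, hQ _ (hline z), ← mul_conj, ← mul_conj]
  simp only [Subalgebra.coe_mul, Subalgebra.coe_sub, Subalgebra.coe_add, Subalgebra.coe_pow,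
    coe_ofNat, Pi.mul_apply, Pi.sub_apply, Pi.add_apply, Pi.pow_apply, Pi.ofNat_apply,
    conj_apply] at hpt ⊢
  linear_combination hpt

end RicciFlow

theorem QDHS_differential_inequality_general (I : Set ℝ) (hI_open : IsOpen I)
    (v : ℂ × ℝ → ℝ)
    (hv_smooth : ContDiffOn ℝ (⊤ : ℕ∞) v (Set.univ ×ˢ I))
    (hv_pos : ∀ p : ℂ × ℝ, p.2 ∈ I → 0 < v p)
    (hv_flow : ∀ p : ℂ × ℝ, p.2 ∈ I →
      deriv (fun s : ℝ => v (p.1, s)) p.2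
        = v p * lapR (fun z => v (z, p.2)) p.1 - gradSq (fun z => v (z, p.2)) p.1) :
    ∀ p : ℂ × ℝ, p.2 ∈ I →
      -- `Q` as defined above agrees with `v·(∂³v/∂z³)·(∂³v/∂z̄³)` and is nonnegative
      ((v p : ℂ) * wz (wz (wz (fun w => (v (w, p.2) : ℂ)))) p.1
          * wzb (wzb (wzb (fun w => (v (w, p.2) : ℂ)))) p.1 = ((QrDHS v p : ℝ) : ℂ)) ∧
      0 ≤ QrDHS v p ∧
      -- the differential inequality `∂Q/∂t ≤ v·ΔQ − 4·R·Q`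
      deriv (fun s : ℝ => QrDHS v (p.1, s)) p.2
        ≤ v p * lapR (fun z => QrDHS v (z, p.2)) p.1
          - 4 * scalarR v p * QrDHS v p := by
  rintro ⟨z, t⟩ ht
  have hv : ContDiffOn ℝ ∞ v (slab hI_open) := hv_smooth
  have hv_pos := hv_pos (z, t) ht
  refine ⟨ofReal_mul_wz_mul_wzb hv ht z, mul_nonneg hv_pos.le (normSq_nonneg _), ?_⟩
  obtain ⟨N, hN, hid⟩ := mul_deriv_QrDHS_of_ricciFlow hv hv_flow ht z
  have hdiv : deriv (fun s => QrDHS v (z, s)) t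
      = v (z, t) * lapR (fun w => QrDHS v (w, t)) z
        - 4 * scalarR v (z, t) * QrDHS v (z, t) - 4 * N := by
    apply mul_left_cancel₀ hv_pos.ne'
    rw [hid, scalarR]
    field_simp
  linarith

/-- Let `v` be a smooth positive solution of
`∂v/∂t = v·Δv − ‖∇v‖²` on `ℝ² × I`, `I` an open interval. Then the quantity
`Q = v·(∂³v/∂z³)·(∂³v/∂z̄³) = v·|∂³v/∂z³|²` (a real, nonnegative function)
satisfies `∂Q/∂t ≤ v·ΔQ − 4·R·Q` at every point of `ℝ² × I`, where
`R = v⁻¹(v·Δv − ‖∇v‖²)` and `ΔQ` is the Euclidean Laplacian of `Q` in the `x`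
variable. -/
theorem QDHS_differential_inequality (I : Set ℝ) (hI_open : IsOpen I)
    (hI_conn : I.OrdConnected)
    (v : ℂ × ℝ → ℝ)
    (hv_smooth : ContDiffOn ℝ (⊤ : ℕ∞) v (Set.univ ×ˢ I))
    (hv_pos : ∀ p : ℂ × ℝ, p.2 ∈ I → 0 < v p)
    (hv_flow : ∀ p : ℂ × ℝ, p.2 ∈ I →
      deriv (fun s : ℝ => v (p.1, s)) p.2
        = v p * lapR (fun z => v (z, p.2)) p.1 - gradSq (fun z => v (z, p.2)) p.1) :
    ∀ p : ℂ × ℝ, p.2 ∈ I →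
      -- `Q` as defined above agrees with `v·(∂³v/∂z³)·(∂³v/∂z̄³)` and is nonnegative
      ((v p : ℂ) * wz (wz (wz (fun w => (v (w, p.2) : ℂ)))) p.1
          * wzb (wzb (wzb (fun w => (v (w, p.2) : ℂ)))) p.1 = ((QrDHS v p : ℝ) : ℂ)) ∧
      0 ≤ QrDHS v p ∧
      -- the differential inequality `∂Q/∂t ≤ v·ΔQ − 4·R·Q`
      deriv (fun s : ℝ => QrDHS v (p.1, s)) p.2
        ≤ v p * lapR (fun z => QrDHS v (z, p.2)) p.1
          - 4 * scalarR v p * QrDHS v p :=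
  QDHS_differential_inequality_general I hI_open v hv_smooth hv_pos hv_flow
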